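/- Let M > 0, n, k, r positive integers with r < k < n, r | k, and ρ ∈ [0,1). Define f(0) = 2M(1−ρ)(n−r) / ((2k)/r · (n−k)) = M r (1−ρ)(n−r)/(k(n−k)). If the repair bandwidth satisfies γ ≥ f(0), i.e., β = γ/(n−r) ≥ M r (1−ρ)/(k(n−k)), then α = M/k satisfies Σ_{s=1}^{k/r} min{ rρα + (n−sr)β, rα } ≥ M. -/
import Mathlib


open Finset

/-- MSR feasibility: if β ≥ Mr(1−ρ)/(k(n−k)), then α = M/k satisfies the
min-cut condition Σ_{s=1}^{k/r} min{rρα + (n−sr)β, rα} ≥ M. -/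
theorem stmt_2 (M : ℝ) (n k r : ℕ) (hM : 0 < M) (hr : 0 < r) (hrk : r < k)
    (hkn : k < n) (hdvd : r ∣ k) (ρ : ℝ) (hρ0 : 0 ≤ ρ) (hρ1 : ρ < 1)
    (β : ℝ) (hβ : M * r * (1 - ρ) / (k * ((n : ℝ) - k)) ≤ β) :
    M ≤ ∑ s ∈ Icc 1 (k / r),
        min ((r : ℝ) * ρ * (M / k) + ((n : ℝ) - (s : ℝ) * r) * β)
          ((r : ℝ) * (M / k)) := by
  have hk : 0 < k := hr.trans hrk
  have hkR : (0:ℝ) < (k:ℝ) := by exact_mod_cast hk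
  have hnk : (0:ℝ) < (n:ℝ) - k := by
    have : (k:ℝ) < n := by exact_mod_cast hkn
    linarith
  have hmul : (k / r) * r = k := Nat.div_mul_cancel hdvd
  have hρ' : (0:ℝ) < 1 - ρ := by linarith
  have hβ0 : 0 ≤ β := le_trans (by positivity) hβ
  have hterm : ∀ s ∈ Icc 1 (k / r),
      (r:ℝ) * (M / k) ≤
        min ((r : ℝ) * ρ * (M / k) + ((n : ℝ) - (s : ℝ) * r) * β)
          ((r : ℝ) * (M / k)) := by
    intro s hs
    rw [mem_Icc] at hs
    refine le_min ?_ le_rfl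
    have hsr : (s:ℝ) * r ≤ (k:ℝ) := by
      have : s * r ≤ k := by
        calc s * r ≤ (k / r) * r := Nat.mul_le_mul_right r hs.2
        _ = k := hmul
      exact_mod_cast this
    have h1 : (n:ℝ) - k ≤ (n:ℝ) - (s:ℝ) * r := by linarith
    have h2 : M * r * (1 - ρ) / k ≤ ((n : ℝ) - (s : ℝ) * r) * β := by
      calc M * r * (1 - ρ) / k
          = ((n:ℝ) - k) * (M * r * (1 - ρ) / (k * ((n : ℝ) - k))) := by
            field_simp
        _ ≤ ((n:ℝ) - k) * β := by
            exact mul_le_mul_of_nonneg_left hβ hnk.le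
        _ ≤ ((n : ℝ) - (s : ℝ) * r) * β := mul_le_mul_of_nonneg_right h1 hβ0
    have : (r:ℝ) * (M / k) - (r:ℝ) * ρ * (M / k) = M * r * (1 - ρ) / k := by
      field_simp
    linarith
  calc M = ((k / r : ℕ) : ℝ) * ((r:ℝ) * (M / k)) := by
        have : ((k / r : ℕ) : ℝ) * r = k := by exact_mod_cast hmul
        field_simp
        nlinarith [this]
    _ = ∑ _s ∈ Icc 1 (k / r), (r:ℝ) * (M / k) := by
        rw [Finset.sum_const, Nat.card_Icc]
        simp [nsmul_eq_mul]
    _ ≤ _ := Finset.sum_le_sum hterm
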